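/- Let ε, ε' ∈ 𝓔 and let 1 ≤ k < r be such that for every l ∈ {1, …, r} with l ≠ k and every j ∈ J one has Σ_{m=1}^l ε(m,j) = Σ_{m=1}^l ε'(m,j). Then either ε' = ε, or ε' = τ·ε where τ is the transposition of {1, …, r} exchanging k and k+1 (equivalently: for every j ∈ J, ε'(k,j) = ε(k+1,j), ε'(k+1,j) = ε(k,j), and ε'(l,j) = ε(l,j) for all l ∉ {k, k+1}). -/

import Mathlib

/-!
Comparing the partial sums up to `l - 1` and `l` shows that `ε'` and `ε` agree on every row
`l ∉ {k, k + 1}`, and comparing those up to `k - 1` and `k + 1` shows that the two rows `k`, `k + 1`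
have the same column sums in `ε` and `ε'`. Rows are `{0,1}`-valued and nondecreasing, so if
`ε'` and `ε` differ in row `k` at some `j₀`, the pair of entries is `(1,0)` in one and `(0,1)`
in the other there; monotonicity then forces the rows to be swapped in every column.
-/

/-- The set 𝓔 of functions `ε : {1,…,r} × J → {0,1}` (first variable ranging over
`{1,…,r} ⊆ ℕ`, second over the subtype of members of `J`), such that each column `j`
sums to `j` and each row is nondecreasing in `j ∈ J`. -/
def IsE (r : ℕ) (J : Finset ℕ) (ε : ℕ → {j // j ∈ J} → ℕ) : Prop :=
  (∀ k ∈ Finset.Icc 1 r, ∀ j, ε k j ≤ 1) ∧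
  (∀ j : {j // j ∈ J}, ∑ k ∈ Finset.Icc 1 r, ε k j = (j : ℕ)) ∧
  (∀ k ∈ Finset.Icc 1 r, ∀ j j' : {j // j ∈ J}, (j : ℕ) ≤ (j' : ℕ) → ε k j ≤ ε k j')

open Finset

section PartialSums

variable {M : Type*} [AddCancelCommMonoid M] {f g : ℕ → M} {n : ℕ}

theorem eq_succ_of_sum_Icc_eq (h₀ : ∑ m ∈ Icc 1 n, f m = ∑ m ∈ Icc 1 n, g m)
    (h₁ : ∑ m ∈ Icc 1 (n + 1), f m = ∑ m ∈ Icc 1 (n + 1), g m) : f (n + 1) = g (n + 1) := by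
  rw [sum_Icc_succ_top (by omega), sum_Icc_succ_top (by omega), h₀] at h₁
  exact add_left_cancel h₁

theorem add_succ_eq_of_sum_Icc_eq (h₀ : ∑ m ∈ Icc 1 n, f m = ∑ m ∈ Icc 1 n, g m)
    (h₂ : ∑ m ∈ Icc 1 (n + 1 + 1), f m = ∑ m ∈ Icc 1 (n + 1 + 1), g m) :
    f (n + 1) + f (n + 1 + 1) = g (n + 1) + g (n + 1 + 1) := by
  rw [sum_Icc_succ_top (by omega), sum_Icc_succ_top (by omega), sum_Icc_succ_top (by omega),
    sum_Icc_succ_top (by omega), h₀] at h₂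
  exact add_left_cancel ((add_assoc _ _ _).symm.trans (h₂.trans (add_assoc _ _ _)))

end PartialSums

theorem eq_or_swap_of_monotone_of_add_eq {ι : Type*} [LinearOrder ι] {a b a' b' : ι → ℕ}
    (ha : Monotone a) (hb : Monotone b) (ha' : Monotone a') (hb' : Monotone b')
    (ha₁ : ∀ i, a i ≤ 1) (hb₁ : ∀ i, b i ≤ 1) (ha'₁ : ∀ i, a' i ≤ 1) (hb'₁ : ∀ i, b' i ≤ 1)
    (hsum : ∀ i, a i + b i = a' i + b' i) :
    (a' = a ∧ b' = b) ∨ (a' = b ∧ b' = a) := by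
  by_cases hdiff : ∃ i₀, a' i₀ ≠ a i₀
  · obtain ⟨i₀, hi₀⟩ := hdiff
    right
    have hswap : ∀ i, a' i = b i ∧ b' i = a i := by
      intro i
      have := hsum i; have := hsum i₀
      have := ha₁ i; have := hb₁ i; have := ha'₁ i; have := hb'₁ i
      have := ha₁ i₀; have := hb₁ i₀; have := ha'₁ i₀; have := hb'₁ i₀
      rcases le_total i i₀ with hle | hle
      · have := ha hle; have := hb hle; have := ha' hle; have := hb' hle
        omega
      · have := ha hle; have := hb hle; have := ha' hle; have := hb' hle
        omega
    exact ⟨funext fun i => (hswap i).1, funext fun i => (hswap i).2⟩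
  · push Not at hdiff
    refine .inl ⟨funext hdiff, funext fun i => ?_⟩
    have := hsum i
    rw [hdiff i] at this
    omega

theorem stmt_4_general (r : ℕ) (J : Finset ℕ)
    (ε ε' : ℕ → {j // j ∈ J} → ℕ) (hε : IsE r J ε) (hε' : IsE r J ε')
    (k : ℕ) (hk1 : 1 ≤ k) (hk2 : k < r)
    (h : ∀ l ∈ Finset.Icc 1 r, l ≠ k → ∀ j : {j // j ∈ J},
      ∑ m ∈ Finset.Icc 1 l, ε m j = ∑ m ∈ Finset.Icc 1 l, ε' m j) :
    (∀ l ∈ Finset.Icc 1 r, ∀ j, ε' l j = ε l j) ∨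
    (∀ j : {j // j ∈ J}, ε' k j = ε (k + 1) j ∧ ε' (k + 1) j = ε k j ∧
      ∀ l ∈ Finset.Icc 1 r, l ≠ k → l ≠ k + 1 → ε' l j = ε l j) := by
  obtain ⟨hε₁, -, hεmono⟩ := hε
  obtain ⟨hε'₁, -, hε'mono⟩ := hε'
  obtain ⟨n, rfl⟩ : ∃ n, k = n + 1 := ⟨k - 1, by omega⟩
  have hsum (l : ℕ) (hl : l ≤ r) (hlk : l ≠ n + 1) (j : {j // j ∈ J}) :
      ∑ m ∈ Icc 1 l, ε m j = ∑ m ∈ Icc 1 l, ε' m j := by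
    rcases l.eq_zero_or_pos with rfl | hl₀
    · simp
    · exact h l (mem_Icc.2 ⟨hl₀, hl⟩) hlk j
  have hout (l : ℕ) (hl : l ∈ Icc 1 r) (hl₁ : l ≠ n + 1) (hl₂ : l ≠ n + 1 + 1) (j) :
      ε' l j = ε l j := by
    obtain ⟨p, rfl⟩ : ∃ p, l = p + 1 := ⟨l - 1, by simp at hl; omega⟩
    simp only [mem_Icc] at hl
    exact (eq_succ_of_sum_Icc_eq (hsum p (by omega) (by omega) j)
      (hsum (p + 1) hl.2 hl₁ j)).symm
  have hrow₁ : n + 1 ∈ Icc 1 r := mem_Icc.2 ⟨by omega, by omega⟩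
  have hrow₂ : n + 1 + 1 ∈ Icc 1 r := mem_Icc.2 ⟨by omega, by omega⟩
  rcases eq_or_swap_of_monotone_of_add_eq
      (fun _ _ => hεmono _ hrow₁ _ _) (fun _ _ => hεmono _ hrow₂ _ _)
      (fun _ _ => hε'mono _ hrow₁ _ _) (fun _ _ => hε'mono _ hrow₂ _ _)
      (hε₁ _ hrow₁) (hε₁ _ hrow₂) (hε'₁ _ hrow₁) (hε'₁ _ hrow₂)
      (fun j => add_succ_eq_of_sum_Icc_eq (hsum n (by omega) (by omega) j)
        (hsum (n + 1 + 1) (by omega) (by omega) j)) with ⟨h₁, h₂⟩ | ⟨h₁, h₂⟩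
  · left
    intro l hl j
    by_cases hl₁ : l = n + 1
    · exact hl₁ ▸ congrFun h₁ j
    by_cases hl₂ : l = n + 1 + 1
    · exact hl₂ ▸ congrFun h₂ j
    exact hout l hl hl₁ hl₂ j
  · exact .inr fun j => ⟨congrFun h₁ j, congrFun h₂ j, fun l hl hl₁ hl₂ => hout l hl hl₁ hl₂ j⟩

/-- if `ε, ε' ∈ 𝓔` and `1 ≤ k < r` are such that all partial sums
`Σ_{m≤l} ε(m,j)` and `Σ_{m≤l} ε'(m,j)` agree for every `l ≠ k` in `{1,…,r}` and every
`j ∈ J`, then either `ε' = ε` (on the domain) or `ε'` is obtained from `ε` by swapping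
rows `k` and `k+1`. -/
theorem stmt_4 (r : ℕ) (hr : 1 ≤ r) (J : Finset ℕ)
    (hJ : J ⊆ Finset.Icc 1 r) (hrJ : r ∈ J)
    (ε ε' : ℕ → {j // j ∈ J} → ℕ) (hε : IsE r J ε) (hε' : IsE r J ε')
    (k : ℕ) (hk1 : 1 ≤ k) (hk2 : k < r)
    (h : ∀ l ∈ Finset.Icc 1 r, l ≠ k → ∀ j : {j // j ∈ J},
      ∑ m ∈ Finset.Icc 1 l, ε m j = ∑ m ∈ Finset.Icc 1 l, ε' m j) :
    (∀ l ∈ Finset.Icc 1 r, ∀ j, ε' l j = ε l j) ∨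
    (∀ j : {j // j ∈ J}, ε' k j = ε (k + 1) j ∧ ε' (k + 1) j = ε k j ∧
      ∀ l ∈ Finset.Icc 1 r, l ≠ k → l ≠ k + 1 → ε' l j = ε l j) :=
  stmt_4_general r J ε ε' hε hε' k hk1 hk2 h
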